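/- arXiv:2407.13624 — 6 statements merged into one kernel-verified Lean document; each statement's English description precedes it below -/
import Mathlib

section
/- Let G be a group acting on a group H by automorphisms. Then the abelianization of the semidirect product G ⋉ H is isomorphic to G^ab × (H^ab)_G, where (H^ab)_G is the quotient of H^ab by the subgroup generated by all elements of the form (g • h) * h⁻¹ with g ∈ G and h ∈ H^ab (with the induced action). -/
/-!
The map `(h, g) ↦ ([g], [h])` from `H ⋊[φ] G` to `G^ab × (H^ab)_G` is a homomorphism because
the twist by `φ g` becomes invisible in the coinvariants. Conversely, the inclusions of `G` and
`H` induce a map back, well defined on the coinvariants since `inl (φ g h)` is the conjugate of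
`inl h` by `inr g` and so has the same image in the abelianization. Both composites are the
identity on generators.
-/

theorem MonoidHom.prod_ext {M N P : Type*} [MulOneClass M] [MulOneClass N] [MulOneClass P]
    {f f' : M × N →* P} (hl : f.comp (inl M N) = f'.comp (inl M N))
    (hr : f.comp (inr M N) = f'.comp (inr M N)) : f = f' := by
  ext p
  rw [← Prod.fst_mul_snd p, map_mul, map_mul]
  exact congr($hl p.1 * $hr p.2)

namespace SemidirectProduct

variable {G H : Type*} [Group G] [Group H] (φ : G →* MulAut H)

def coinvariantSubgroup : Subgroup (Abelianization H) :=
  Subgroup.closure {a : Abelianization H | ∃ (g : G) (h : Abelianization H),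
    a = Abelianization.map (φ g).toMonoidHom h * h⁻¹}

theorem mk_map_aut_eq (g : G) (h : Abelianization H) :
    (Abelianization.map (φ g).toMonoidHom h : Abelianization H ⧸ coinvariantSubgroup φ) = h :=
  QuotientGroup.eq_iff_div_mem.2 (Subgroup.subset_closure ⟨g, h, div_eq_mul_inv _ _⟩)

theorem map_inl_comp_map_aut (g : G) :
    (Abelianization.map inl).comp (Abelianization.map (φ g).toMonoidHom) =
      Abelianization.map (inl : H →* H ⋊[φ] G) := by
  ext n
  simp [inl_aut, mul_inv_cancel_comm]

theorem coinvariantSubgroup_le_ker_map_inl :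
    coinvariantSubgroup φ ≤ (Abelianization.map (inl : H →* H ⋊[φ] G)).ker := by
  refine (Subgroup.closure_le _).2 ?_
  rintro _ ⟨g, h, rfl⟩
  rw [SetLike.mem_coe, MonoidHom.mem_ker, map_mul, map_inv, ← MonoidHom.comp_apply,
    map_inl_comp_map_aut, mul_inv_cancel]

def toAbelianizationProd :
    H ⋊[φ] G →* Abelianization G × (Abelianization H ⧸ coinvariantSubgroup φ) :=
  lift ((MonoidHom.inr _ _).comp ((QuotientGroup.mk' _).comp Abelianization.of))
    ((MonoidHom.inl _ _).comp Abelianization.of) fun g ↦ by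
      ext n
      · simp
      · simpa [MulAut.conj_apply] using mk_map_aut_eq φ g (Abelianization.of n)

def ofAbelianizationProd :
    Abelianization G × (Abelianization H ⧸ coinvariantSubgroup φ) →*
      Abelianization (H ⋊[φ] G) :=
  (Abelianization.map inr).coprod
    (QuotientGroup.lift _ (Abelianization.map inl) (coinvariantSubgroup_le_ker_map_inl φ))

def abelianizationEquiv :
    Abelianization (H ⋊[φ] G) ≃*
      Abelianization G × (Abelianization H ⧸ coinvariantSubgroup φ) :=
  MonoidHom.toMulEquiv (Abelianization.lift (toAbelianizationProd φ)) (ofAbelianizationProd φ)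
    (Abelianization.hom_ext _ _ <|
      hom_ext (by ext; simp [ofAbelianizationProd, toAbelianizationProd])
        (by ext; simp [ofAbelianizationProd, toAbelianizationProd]))
    (MonoidHom.prod_ext (by ext <;> simp [ofAbelianizationProd, toAbelianizationProd])
      (by ext <;> simp [ofAbelianizationProd, toAbelianizationProd]))

end SemidirectProduct

/-- For a group `G` acting on a group `H`, the abelianization of the
semidirect product `G ⋉ H` is isomorphic to `G^ab × (H^ab)_G`, where `(H^ab)_G` is the
quotient of `H^ab` by the subgroup generated by the elements `(g • h) * h⁻¹`. -/
theorem semidirect_abelianization (G H : Type*) [Group G] [Group H] (φ : G →* MulAut H) :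
    Nonempty (Abelianization (H ⋊[φ] G) ≃*
      Abelianization G ×
        (Abelianization H ⧸ Subgroup.closure
          {a : Abelianization H | ∃ (g : G) (h : Abelianization H),
            a = Abelianization.map (φ g).toMonoidHom h * h⁻¹})) :=
  ⟨SemidirectProduct.abelianizationEquiv φ⟩
end

section
/- If T is a set with at least two elements, then the abelianization of the group of finitary permutations of T is isomorphic to Z/2Z. -/
/-- The group of finitary permutations of `T`. -/
def finitaryPerm (T : Type*) : Subgroup (Equiv.Perm T) where
  carrier := {σ | {x | σ x ≠ x}.Finite}
  one_mem' := by simp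
  mul_mem' := by
    intro σ τ hσ hτ
    refine (hσ.union hτ).subset ?_
    intro x hx
    by_cases h : τ x = x
    · exact Or.inl (by simpa [Equiv.Perm.mul_apply, h] using hx)
    · exact Or.inr h
  inv_mem' := by
    intro σ hσ
    refine (hσ.image σ).subset ?_
    intro x hx
    simp only [Set.mem_setOf_eq] at hx
    refine ⟨σ⁻¹ x, ?_, by simp⟩
    simp only [Set.mem_setOf_eq, Equiv.Perm.inv_def, Equiv.apply_symm_apply]
    exact fun h => hx h.symm

/-! Finitary permutations are exactly the products of transpositions, and any two transpositions
are conjugate by a finitary permutation, so the abelianization is generated by the class of a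
single transposition, whose square is trivial. That class is nontrivial because the sign of
`σ` restricted to a finite set containing its support does not depend on the set, which makes
it a homomorphism on finitary permutations sending transpositions to `-1`. -/

open Equiv Equiv.Perm

namespace Equiv.Perm

variable {α : Type*}

theorem pred_apply_iff_of_forall_ne {σ : Perm α} {p : α → Prop} (h : ∀ x, σ x ≠ x → p x)
    (x : α) : p (σ x) ↔ p x := by
  by_cases hx : σ x = x
  · rw [hx]
  · exact ⟨fun _ => h x hx, fun _ => h (σ x) fun heq => hx (σ.injective heq)⟩

variable [DecidableEq α]

theorem sign_subtypePerm_eq_of_subset {σ : Perm α} {s t : Finset α} (hst : s ⊆ t)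
    (hσ : ∀ x, σ x ≠ x → x ∈ s) (hs : ∀ x, σ x ∈ s ↔ x ∈ s) (ht : ∀ x, σ x ∈ t ↔ x ∈ t) :
    sign (σ.subtypePerm hs) = sign (σ.subtypePerm ht) := by
  have h₁ : ∀ x : t, (σ.subtypePerm ht x : α) ∈ s ↔ (x : α) ∈ s := fun x => hs x
  have h₂ : ∀ x : t, σ.subtypePerm ht x ≠ x → (x : α) ∈ s :=
    fun x hx => hσ x fun h => hx (Subtype.ext h)
  rw [← sign_subtypePerm _ h₁ h₂]
  exact sign_eq_sign_of_equiv _ _ (subtypeSubtypeEquivSubtype fun hx => hst hx).symm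
    fun _ => rfl

theorem sign_subtypePerm_finset_eq {σ : Perm α} {s t : Finset α} (hs : ∀ x, σ x ≠ x → x ∈ s)
    (ht : ∀ x, σ x ≠ x → x ∈ t) :
    sign (σ.subtypePerm (pred_apply_iff_of_forall_ne hs)) =
      sign (σ.subtypePerm (pred_apply_iff_of_forall_ne ht)) := by
  have hst : ∀ x, σ x ≠ x → x ∈ s ∩ t := fun x hx => Finset.mem_inter.2 ⟨hs x hx, ht x hx⟩
  rw [← sign_subtypePerm_eq_of_subset Finset.inter_subset_left hst
    (pred_apply_iff_of_forall_ne hst), sign_subtypePerm_eq_of_subset Finset.inter_subset_right hst]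

theorem sign_subtypePerm_swap {a b : α} (hab : a ≠ b) {s : Finset α} (ha : a ∈ s) (hb : b ∈ s)
    (h : ∀ x, swap a b x ∈ s ↔ x ∈ s) : sign ((swap a b).subtypePerm h) = -1 := by
  have : (swap a b).subtypePerm h = swap ⟨a, ha⟩ ⟨b, hb⟩ := by
    ext x
    simp only [subtypePerm_apply, swap_apply_def, Subtype.ext_iff]
    split_ifs <;> rfl
  rw [this, sign_swap (mt (congrArg Subtype.val) hab)]

end Equiv.Perm

theorem Abelianization.mem_zpowers_of_forall_isConj {G : Type*} [Group G] {S : Set G}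
    (hS : Subgroup.closure S = ⊤) {g : G} (hg : ∀ s ∈ S, IsConj g s) (x : Abelianization G) :
    x ∈ Subgroup.zpowers (of g) := by
  have himage : of '' S ⊆ {of g} := by
    rintro _ ⟨s, hs, rfl⟩
    exact (isConj_iff_eq.1 (of.map_isConj (hg s hs))).symm
  have hclosure : Subgroup.closure (of '' S) = ⊤ := by
    rw [← MonoidHom.map_closure, hS, ← MonoidHom.range_eq_map, MonoidHom.range_eq_top]
    exact QuotientGroup.mk_surjective
  rw [Subgroup.zpowers_eq_closure]
  exact Subgroup.closure_mono himage (hclosure ▸ Subgroup.mem_top x)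

section finitaryPerm

variable {T : Type*}

theorem mem_finitaryPerm_iff {σ : Perm T} : σ ∈ finitaryPerm T ↔ {x | σ x ≠ x}.Finite :=
  Iff.rfl

noncomputable def finitarySupport (σ : finitaryPerm T) : Finset T :=
  (mem_finitaryPerm_iff.1 σ.2).toFinset

theorem mem_finitarySupport {σ : finitaryPerm T} {x : T} :
    x ∈ finitarySupport σ ↔ (σ : Perm T) x ≠ x :=
  Set.Finite.mem_toFinset _

variable [DecidableEq T]

theorem finitaryPerm_eq_closure_isSwap : finitaryPerm T = Subgroup.closure {σ | IsSwap σ} :=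
  Subgroup.ext fun _ => mem_closure_isSwap'.symm

theorem closure_isSwap_finitaryPerm :
    Subgroup.closure {σ : finitaryPerm T | (σ : Perm T).IsSwap} = ⊤ := by
  rw [finitaryPerm_eq_closure_isSwap]
  exact Subgroup.closure_closure_coe_preimage

theorem swap_mem_finitaryPerm (a b : T) : swap a b ∈ finitaryPerm T :=
  finite_compl_fixedBy_swap

theorem exists_mem_finitaryPerm_apply_eq_apply_eq {a b c d : T} (hab : a ≠ b) (hcd : c ≠ d) :
    ∃ ρ ∈ finitaryPerm T, ρ a = c ∧ ρ b = d := by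
  have hc : c ≠ swap a c b := by
    simpa using (swap a c).injective.ne hab
  refine ⟨swap (swap a c b) d * swap a c,
    mul_mem (swap_mem_finitaryPerm _ _) (swap_mem_finitaryPerm _ _), ?_, ?_⟩
  · simp [swap_apply_of_ne_of_ne hc hcd]
  · simp

theorem isConj_of_isSwap {σ τ : finitaryPerm T} (hσ : (σ : Perm T).IsSwap)
    (hτ : (τ : Perm T).IsSwap) : IsConj σ τ := by
  obtain ⟨a, b, hab, hσ⟩ := hσ
  obtain ⟨c, d, hcd, hτ⟩ := hτ
  obtain ⟨ρ, hρ, hρa, hρb⟩ := exists_mem_finitaryPerm_apply_eq_apply_eq hab hcd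
  refine isConj_iff.2 ⟨⟨ρ, hρ⟩, Subtype.ext ?_⟩
  simp only [Subgroup.coe_mul, Subgroup.coe_inv, hσ, hτ, ← swap_apply_apply, hρa, hρb]

noncomputable def finitarySign : finitaryPerm T →* ℤˣ where
  toFun σ := sign ((σ : Perm T).subtypePerm
    (pred_apply_iff_of_forall_ne fun _ => mem_finitarySupport.2))
  map_one' := (congrArg sign (subtypePerm_one _ _)).trans (map_one sign)
  map_mul' σ τ := by
    set u := finitarySupport σ ∪ finitarySupport τ
    have hσ : ∀ x, (σ : Perm T) x ≠ x → x ∈ u := fun _ hx =>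
      Finset.mem_union_left _ (mem_finitarySupport.2 hx)
    have hτ : ∀ x, (τ : Perm T) x ≠ x → x ∈ u := fun _ hx =>
      Finset.mem_union_right _ (mem_finitarySupport.2 hx)
    have hστ : ∀ x, ((σ * τ : finitaryPerm T) : Perm T) x ≠ x → x ∈ u := fun x hx => by
      by_cases h : (τ : Perm T) x = x
      · exact hσ x (by simpa [h] using hx)
      · exact hτ x h
    rw [sign_subtypePerm_finset_eq (fun _ => mem_finitarySupport.2) hστ,
      sign_subtypePerm_finset_eq (fun _ => mem_finitarySupport.2) hσ,
      sign_subtypePerm_finset_eq (fun _ => mem_finitarySupport.2) hτ, ← map_mul, subtypePerm_mul]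
    rfl

theorem finitarySign_of_isSwap {σ : finitaryPerm T} (hσ : (σ : Perm T).IsSwap) :
    finitarySign σ = -1 := by
  obtain ⟨σ, hσmem⟩ := σ
  obtain ⟨a, b, hab, rfl⟩ := hσ
  have hsupp : ∀ x, swap a b x ≠ x → x ∈ ({a, b} : Finset T) := fun x hx => by
    simpa using (swap_apply_ne_self_iff.1 hx).2
  show sign _ = _
  rw [sign_subtypePerm_finset_eq (fun _ => mem_finitarySupport.2) hsupp]
  exact sign_subtypePerm_swap hab (by simp) (by simp) _

end finitaryPerm

/-- If `T` has at least two elements, the abelianization of the group of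
finitary permutations of `T` is isomorphic to `ℤ/2ℤ`. -/
theorem abelianization_finitaryPerm (T : Type*) (hT : ∃ a b : T, a ≠ b) :
    Nonempty (Abelianization ↥(finitaryPerm T) ≃* Multiplicative (ZMod 2)) := by
  classical
  obtain ⟨a, b, hab⟩ := hT
  let τ : finitaryPerm T := ⟨swap a b, swap_mem_finitaryPerm a b⟩
  have hτ : (τ : Perm T).IsSwap := ⟨a, b, hab, rfl⟩
  have hgen : ∀ x, x ∈ Subgroup.zpowers (Abelianization.of τ) :=
    Abelianization.mem_zpowers_of_forall_isConj closure_isSwap_finitaryPerm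
      fun _ hσ => isConj_of_isSwap hτ hσ
  have hsq : Abelianization.of τ ^ 2 = 1 := by
    rw [← map_pow, sq, show τ * τ = 1 from Subtype.ext (swap_mul_self a b), map_one]
  have hne : Abelianization.of τ ≠ 1 := fun h => by
    simpa [finitarySign_of_isSwap hτ] using congrArg (Abelianization.lift finitarySign) h
  have hcard : Nat.card (Abelianization (finitaryPerm T)) = 2 :=
    (orderOf_eq_card_of_forall_mem_zpowers hgen).symm.trans (orderOf_eq_prime hsq hne)
  exact ⟨mulEquivOfPrimeCardEq hcard (by simp)⟩
end

section
/- Let G be a group, T a set, and Σ = FS(T). Define ε : ⊕_{x∈T} G^ab → G^ab by ε((g_x)_x) = ∏_x g_x (a finite product since all but finitely many entries are trivial). Then the kernel of ε equals the subgroup of ⊕_{x∈T} G^ab generated by all elements of the form (σ • g) * g⁻¹ where σ ∈ Σ acts by permuting coordinates and g ∈ ⊕_{x∈T} G^ab. -/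
/-- The finitary alternating group on `T`: the subgroup generated by products of
two transpositions. -/
def finitaryAlt (T : Type*) [DecidableEq T] : Subgroup (Equiv.Perm T) :=
  Subgroup.closure {σ | ∃ a b c d : T, a ≠ b ∧ c ≠ d ∧ σ = Equiv.swap a b * Equiv.swap c d}

/-- The restricted direct product `⊕_{x ∈ T} G` of copies of a group `G`. -/
def restrictedProd (T G : Type*) [Group G] : Subgroup (T → G) where
  carrier := {f | {x | f x ≠ 1}.Finite}
  one_mem' := by simp
  mul_mem' := by
    intro f g hf hg
    refine (hf.union hg).subset ?_
    intro x hx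
    by_cases h : f x = 1
    · exact Or.inr (by simpa [Pi.mul_apply, h] using hx)
    · exact Or.inl h
  inv_mem' := by
    intro f hf
    refine hf.subset ?_
    intro x hx
    simp only [Set.mem_setOf_eq, Pi.inv_apply, ne_eq, inv_eq_one] at hx ⊢
    exact hx

/-- A permutation of `T` acts on the restricted product by permuting coordinates. -/
def permAut (T G : Type*) [Group G] (σ : Equiv.Perm T) : MulAut ↥(restrictedProd T G) where
  toFun f := ⟨fun x => f.1 (σ.symm x), by
    refine (f.2.image σ).subset ?_
    intro x hx
    exact ⟨σ.symm x, hx, by simp⟩⟩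
  invFun f := ⟨fun x => f.1 (σ x), by
    refine (f.2.image σ.symm).subset ?_
    intro x hx
    exact ⟨σ x, hx, by simp⟩⟩
  left_inv f := by
    ext x
    simp
  right_inv f := by
    ext x
    simp
  map_mul' f g := by
    ext x
    rfl

/-- The homomorphism from finitary permutations of `T` to automorphisms of
`⊕_{x ∈ T} G`, giving the restricted wreath product `G wr_T FS(T)`. -/
def wreathAction (G T : Type*) [Group G] :
    ↥(finitaryPerm T) →* MulAut ↥(restrictedProd T G) where
  toFun σ := permAut T G σ.1
  map_one' := by
    ext f x
    rfl
  map_mul' σ τ := by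
    ext f x
    rfl

/-- Multiplying together all the (finitely many nontrivial) coordinates. -/
noncomputable def epsHom (T G : Type*) [CommGroup G] : ↥(restrictedProd T G) →* G where
  toFun f := ∏ᶠ x, f.1 x
  map_one' := by
    simp [restrictedProd]
  map_mul' f g := finprod_mul_distrib f.2 g.2

lemma swap_mem_finitaryPerm_s5 {T : Type*} [DecidableEq T] (x y : T) : Equiv.swap x y ∈ finitaryPerm T :=
  (Set.toFinite {x, y}).subset fun z hz => by
    by_contra h
    simp only [Set.mem_insert_iff, Set.mem_singleton_iff, not_or] at h
    exact hz (Equiv.swap_apply_of_ne_of_ne h.1 h.2)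

namespace restrictedProd

variable {T G : Type*} [Group G]

/-- In the wreath product `G wr_T FS(T)` these are the commutators `[σ, g]`. -/
def wreathCommutators (G T : Type*) [Group G] : Set ↥(restrictedProd T G) :=
  {a | ∃ (σ : ↥(finitaryPerm T)) (g : ↥(restrictedProd T G)), a = wreathAction G T σ g * g⁻¹}

lemma wreathAction_apply (σ : finitaryPerm T) : wreathAction G T σ = permAut T G σ := rfl

section DecidableEq

variable [DecidableEq T]

def mulSingle (x : T) : G →* restrictedProd T G where
  toFun a := ⟨Pi.mulSingle x a, (Set.finite_singleton x).subset Pi.mulSupport_mulSingle_subset⟩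
  map_one' := by ext; simp
  map_mul' a b := by ext; simp [Pi.mulSingle_mul]

@[simp]
lemma coe_mulSingle (x : T) (a : G) : (mulSingle x a : T → G) = Pi.mulSingle x a := rfl

lemma permAut_mulSingle (σ : Equiv.Perm T) (x : T) (a : G) :
    permAut T G σ (mulSingle x a) = mulSingle (σ x) a :=
  Subtype.ext (Pi.mulSingle_comp_equiv σ.symm x a)

lemma mulSingle_mul_inv_mem_closure (x y : T) (a : G) :
    mulSingle y a * (mulSingle x a)⁻¹ ∈ Subgroup.closure (wreathCommutators G T) := by
  refine Subgroup.subset_closure ⟨⟨_, swap_mem_finitaryPerm_s5 x y⟩, mulSingle x a, ?_⟩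
  rw [wreathAction_apply, permAut_mulSingle, Equiv.swap_apply_left]

end DecidableEq

section CommGroup

variable {T A : Type*} [CommGroup A]

lemma epsHom_eq_prod (f : restrictedProd T A) : epsHom T A f = ∏ x ∈ f.2.toFinset, f.1 x :=
  finprod_eq_prod_of_mulSupport_subset _ f.2.coe_toFinset.ge

lemma epsHom_permAut (σ : Equiv.Perm T) (f : restrictedProd T A) :
    epsHom T A (permAut T A σ f) = epsHom T A f :=
  finprod_comp_equiv σ.symm

lemma eq_prod_mulSingle [DecidableEq T] (f : restrictedProd T A) :
    f = ∏ x ∈ f.2.toFinset, mulSingle x (f.1 x) := by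
  ext y
  by_cases hy : f.1 y = 1
  · simp [Finset.prod_apply, hy]
  · simp [Finset.prod_apply, f.2.mem_toFinset.2 hy]

lemma closure_wreathCommutators_le_ker :
    Subgroup.closure (wreathCommutators A T) ≤ (epsHom T A).ker := by
  rw [Subgroup.closure_le]
  rintro _ ⟨σ, g, rfl⟩
  rw [SetLike.mem_coe, MonoidHom.mem_ker, map_mul, map_inv, wreathAction_apply, epsHom_permAut,
    mul_inv_cancel]

lemma ker_le_closure_wreathCommutators :
    (epsHom T A).ker ≤ Subgroup.closure (wreathCommutators A T) := by
  classical
  intro f hf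
  rcases isEmpty_or_nonempty T with _ | ⟨⟨x₀⟩⟩
  · rw [Subsingleton.elim f 1]
    exact one_mem _
  -- a transposition moves each coordinate `f x` to `x₀`, where they multiply to `ε f = 1`
  have hf' : f = ∏ x ∈ f.2.toFinset, mulSingle x (f.1 x) * (mulSingle x₀ (f.1 x))⁻¹ := by
    rw [Finset.prod_mul_distrib, Finset.prod_inv_distrib, ← map_prod, ← epsHom_eq_prod,
      MonoidHom.mem_ker.1 hf, map_one, inv_one, mul_one, ← eq_prod_mulSingle]
  rw [hf']
  exact Subgroup.prod_mem _ fun x _ => mulSingle_mul_inv_mem_closure x₀ x _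

end CommGroup

end restrictedProd

open restrictedProd in
/-- For `ε : ⊕_{x∈T} G^ab → G^ab` the product-of-coordinates map, the
kernel of `ε` equals the subgroup generated by the elements `(σ • g) * g⁻¹` for
`σ ∈ FS(T)` acting by permuting coordinates. -/
theorem ker_eps_eq_closure (G T : Type*) [Group G] :
    (epsHom T (Abelianization G)).ker = Subgroup.closure
      {a : ↥(restrictedProd T (Abelianization G)) |
        ∃ (σ : ↥(finitaryPerm T)) (g : ↥(restrictedProd T (Abelianization G))),
          a = wreathAction (Abelianization G) T σ g * g⁻¹} :=
  le_antisymm ker_le_closure_wreathCommutators closure_wreathCommutators_le_ker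
end

section
/- Let R be a commutative ring with unity, M a right R-module, and n ≥ 2. Then the abelianization of the semidirect product GL_n(R) ⋉ Mⁿ (with GL_n(R) acting on Mⁿ by matrix multiplication) is isomorphic to the abelianization of GL_n(R). -/
/-!
The transvection `1 + E_ij` sends `e_j m` to `e_j m + e_i m`, so in the semidirect product
`e_i m` is a commutator of `e_j m` with that transvection. Since `n ≥ 2` every `e_i m` arises
this way and these generate `Mⁿ`, so `Mⁿ` dies in the abelianization, which is therefore the
abelianization of `GL_n(R)`.
-/

/-- Matrix action on `Fin n → M` by matrix-vector multiplication. -/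
def matSMul (R M : Type*) [CommRing R] [AddCommGroup M] [Module R M] (n : ℕ)
    (A : Matrix (Fin n) (Fin n) R) : AddMonoid.End (Fin n → M) :=
  AddMonoidHom.mk' (fun x i => ∑ j, A i j • x j) (by
    intro x y
    funext i
    simp [smul_add, Finset.sum_add_distrib])

def matSMulHom (R M : Type*) [CommRing R] [AddCommGroup M] [Module R M] (n : ℕ) :
    Matrix (Fin n) (Fin n) R →* AddMonoid.End (Fin n → M) where
  toFun := matSMul R M n
  map_one' := by
    refine AddMonoidHom.ext fun x => funext fun i => ?_
    simp [matSMul, Matrix.one_apply, Finset.sum_ite_eq]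
    rfl
  map_mul' A B := by
    refine AddMonoidHom.ext fun x => funext fun i => ?_
    show ∑ j, (A * B) i j • x j = ∑ k, A i k • ∑ j, B k j • x j
    simp only [Matrix.mul_apply, Finset.sum_smul, Finset.smul_sum, mul_smul]
    exact Finset.sum_comm

def unitsEndToAddAut (P : Type*) [AddCommGroup P] : (AddMonoid.End P)ˣ →* Multiplicative (AddAut P) where
  toFun u := Multiplicative.ofAdd
    { toFun := u.val
      invFun := (↑u⁻¹ : AddMonoid.End P)
      left_inv := fun x => DFunLike.congr_fun u.inv_mul x
      right_inv := fun x => DFunLike.congr_fun u.mul_inv x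
      map_add' := u.val.map_add }
  map_one' := rfl
  map_mul' _ _ := rfl

def addAutToMulAut (P : Type*) [AddGroup P] : Multiplicative (AddAut P) →* MulAut (Multiplicative P) where
  toFun e := AddEquiv.toMultiplicative (Multiplicative.toAdd e)
  map_one' := rfl
  map_mul' _ _ := rfl

/-- The action of `GL n R` on the additive group `Mⁿ` (written multiplicatively). -/
def glAction (R M : Type*) [CommRing R] [AddCommGroup M] [Module R M] (n : ℕ) :
    GL (Fin n) R →* MulAut (Multiplicative (Fin n → M)) :=
  (addAutToMulAut _).comp ((unitsEndToAddAut _).comp (Units.map (matSMulHom R M n)))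

namespace SemidirectProduct

variable {N G : Type*} [Group N] [Group G] {φ : G →* MulAut N}

theorem abelianization_of_inl_aut (g : G) (x : N) :
    Abelianization.of (inl (φ g x) : N ⋊[φ] G) = Abelianization.of (inl x) := by
  rw [inl_aut, map_mul, map_mul, map_inv, map_inv, mul_inv_cancel_comm]

noncomputable def abelianizationMulEquivOfInl
    (h : ∀ x : N, Abelianization.of (inl x : N ⋊[φ] G) = 1) :
    Abelianization (N ⋊[φ] G) ≃* Abelianization G :=
  MonoidHom.toMulEquiv (Abelianization.map rightHom) (Abelianization.map inr)
    (by
      ext g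
      suffices Abelianization.of (inr g.right) = Abelianization.of g by simpa
      conv_rhs => rw [← inl_left_mul_inr_right g, map_mul, h, one_mul])
    (by ext g; simp)

end SemidirectProduct

section GLSemidirect

open SemidirectProduct

variable (R M : Type*) [CommRing R] [AddCommGroup M] [Module R M] (n : ℕ)

theorem matSMul_transvection_single (i j : Fin n) (c : R) (m : M) :
    matSMul R M n (Matrix.transvection i j c) (Pi.single j m)
      = Pi.single j m + Pi.single i (c • m) := by
  ext k
  change ∑ l, Matrix.transvection i j c k l • (Pi.single j m : Fin n → M) l = _
  simp [Matrix.transvection, Matrix.one_apply, Matrix.single_apply, Pi.single_apply, add_smul,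
    ite_smul, eq_comm]

theorem abelianization_of_inl_single_eq_one {i j : Fin n} (hij : i ≠ j) (m : M) :
    Abelianization.of (inl (Multiplicative.ofAdd (Pi.single i m)) :
      Multiplicative (Fin n → M) ⋊[glAction R M n] GL (Fin n) R) = 1 := by
  have key := abelianization_of_inl_aut (φ := glAction R M n)
    (Matrix.SpecialLinearGroup.toGL (Matrix.SpecialLinearGroup.transvection hij (1 : R)))
    (Multiplicative.ofAdd (Pi.single j m))
  change Abelianization.of (inl (Multiplicative.ofAdd
    (matSMul R M n (Matrix.transvection i j 1) (Pi.single j m)))) = _ at key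
  rwa [matSMul_transvection_single, one_smul, ofAdd_add, map_mul, map_mul,
    mul_eq_left] at key

theorem abelianization_of_inl_eq_one (hn : 2 ≤ n) (x : Fin n → M) :
    Abelianization.of (inl (Multiplicative.ofAdd x) :
      Multiplicative (Fin n → M) ⋊[glAction R M n] GL (Fin n) R) = 1 := by
  have : Nontrivial (Fin n) := Fin.nontrivial_iff_two_le.mpr hn
  induction x using Pi.single_induction with
  | zero => simp
  | add x y hx hy => rw [ofAdd_add, map_mul, map_mul, hx, hy, one_mul]
  | single i m =>
    obtain ⟨j, hij⟩ := exists_ne i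
    exact abelianization_of_inl_single_eq_one R M n hij.symm m

end GLSemidirect

/-- For a commutative ring `R`, a (right) `R`-module `M` and `n ≥ 2`,
the abelianization of `GL_n(R) ⋉ Mⁿ` is isomorphic to the abelianization of `GL_n(R)`. -/
theorem abelianization_gl_semidirect (R M : Type*) [CommRing R] [AddCommGroup M] [Module R M]
    (n : ℕ) (hn : 2 ≤ n) :
    Nonempty (Abelianization (Multiplicative (Fin n → M) ⋊[glAction R M n] GL (Fin n) R)
      ≃* Abelianization (GL (Fin n) R)) :=
  ⟨SemidirectProduct.abelianizationMulEquivOfInl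
    (fun x => abelianization_of_inl_eq_one R M n hn (Multiplicative.toAdd x))⟩
end

section
/- Let R be a Noetherian commutative ring. Then the pp-definable subgroups of the right R-module R_R are exactly the (right) ideals of R. -/
/-! The solution set of `∃ y, ⋀ᵢ x rᵢ + Σₖ yₖ cᵢₖ = 0` is the preimage of the image of the linear
map `y ↦ (Σₖ yₖ cᵢₖ)ᵢ` under the linear map `x ↦ (x rᵢ)ᵢ`, hence an ideal. Conversely an ideal of a
Noetherian ring is generated by finitely many `v₁, …, vₙ`, and is then defined by the single
equation `∃ y, x = Σₖ yₖ vₖ`. -/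

namespace PPDefinable

variable {R : Type*} [CommRing R] {m t : ℕ}

def ppSet (r : Fin t → R) (c : Fin t → Fin m → R) : Set R :=
  {x | ∃ y : Fin m → R, ∀ i, x * r i + ∑ k, y k * c i k = 0}

theorem ppSet_eq_comap_range (r : Fin t → R) (c : Fin t → Fin m → R) :
    ppSet r c =
      ((LinearMap.range (Matrix.vecMulLinear (Matrix.of fun k i => c i k))).comap
        (LinearMap.toSpanSingleton R (Fin t → R) r) : Set R) := by
  ext x
  simp only [ppSet, Set.mem_ofPred_eq, SetLike.mem_coe, Submodule.mem_comap, LinearMap.mem_range,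
    funext_iff, Matrix.vecMulLinear_apply, Matrix.vecMul, dotProduct, Matrix.of_apply,
    LinearMap.toSpanSingleton_apply, Pi.smul_apply, smul_eq_mul]
  refine ⟨fun ⟨y, hy⟩ => ⟨-y, fun i => ?_⟩, fun ⟨y, hy⟩ => ⟨-y, fun i => ?_⟩⟩
  all_goals simp only [Pi.neg_apply, neg_mul, Finset.sum_neg_distrib]
  · exact (eq_neg_of_add_eq_zero_left (hy i)).symm
  · rw [hy i, add_neg_cancel]

theorem ppSet_neg_eq_span {n : ℕ} (v : Fin n → R) :
    ppSet (fun _ : Fin 1 => 1) (fun _ k => -v k) = Submodule.span R (Set.range v) := by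
  ext x
  simp only [ppSet, Set.mem_ofPred_eq, SetLike.mem_coe, Submodule.mem_span_range_iff_exists_fun,
    smul_eq_mul, mul_neg, Finset.sum_neg_distrib, mul_one, forall_const]
  exact exists_congr fun y => by rw [add_neg_eq_zero, eq_comm]

end PPDefinable

open PPDefinable in
/-- For a Noetherian commutative ring `R`, the pp-definable subgroups of
the module `R_R` are exactly the ideals of `R`: a subset `s ⊆ R` is the solution set of a
pp-formula `∃ y ⋀ᵢ (x rᵢ + Σₖ yₖ sᵢₖ = 0)` if and only if it is (the underlying set of) an
ideal of `R`. -/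
theorem pp_definable_iff_ideal (R : Type*) [CommRing R] [IsNoetherianRing R] (s : Set R) :
    (∃ (m t : ℕ) (r : Fin t → R) (c : Fin t → Fin m → R),
        s = {x : R | ∃ y : Fin m → R, ∀ i, x * r i + ∑ k, y k * c i k = 0}) ↔
      (∃ I : Ideal R, s = (I : Set R)) := by
  constructor
  · rintro ⟨m, t, r, c, rfl⟩
    exact ⟨_, ppSet_eq_comap_range r c⟩
  · rintro ⟨I, rfl⟩
    obtain ⟨n, v, hv⟩ :=
      Submodule.fg_iff_exists_fin_generating_family.mp (IsNoetherian.noetherian I)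
    exact ⟨n, 1, _, _, by rw [← hv, ← ppSet_neg_eq_span]; rfl⟩
end

section
/- Let R be a Euclidean domain containing units u, v with u + v = 1. Then the commutator subgroup of GL_2(R) equals E_2(R), the subgroup generated by 2×2 elementary matrices. -/
/-!
Commutators have determinant `1`. Over a Euclidean domain, a matrix of determinant `1` whose
lower-left entry `c` is a unit factors as `!![1, x; 0, 1] * !![1, 0; c, 1] * !![1, y; 0, 1]`;
otherwise left multiplication by elementary matrices and the Weyl element `!![0, -1; 1, 0]`
replaces `c` by the remainder `a % c` of the upper-left entry `a`, or, when `c = 0`, by the unit `a`.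
Conversely `⁅diag(1, …, u, …, 1), 1 + r eᵢⱼ⁆ = 1 + (u - 1) r eᵢⱼ`, so if `u - 1` is a unit then
every elementary matrix is a commutator.
-/

open Matrix
open scoped commutatorElement

namespace Matrix.GeneralLinearGroup

section CommRing

variable {n R : Type*} [DecidableEq n] [Fintype n] [CommRing R]

variable (n R) in
def elementarySubgroup : Subgroup (GL n R) :=
  Subgroup.closure {A : GL n R | ∃ (i j : n) (_ : i ≠ j) (r : R),
    (A : Matrix n n R) = Matrix.transvection i j r}

def elementary {i j : n} (hij : i ≠ j) (r : R) : GL n R :=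
  SpecialLinearGroup.toGL (SpecialLinearGroup.transvection hij r)

@[simp]
lemma val_elementary {i j : n} (hij : i ≠ j) (r : R) :
    (elementary hij r : Matrix n n R) = Matrix.transvection i j r := rfl

@[simp]
lemma det_elementary {i j : n} (hij : i ≠ j) (r : R) : det (elementary hij r) = 1 :=
  SpecialLinearGroup.coeToGL_det _

lemma elementary_add {i j : n} (hij : i ≠ j) (r s : R) :
    elementary hij (r + s) = elementary hij r * elementary hij s := by
  rw [elementary, SpecialLinearGroup.transvection_add, map_mul]
  rfl

lemma inv_elementary {i j : n} (hij : i ≠ j) (r : R) :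
    (elementary hij r)⁻¹ = elementary hij (-r) := by
  rw [elementary, ← map_inv, SpecialLinearGroup.transvection_inv]
  rfl

lemma elementary_mem_elementarySubgroup {i j : n} (hij : i ≠ j) (r : R) :
    elementary hij r ∈ elementarySubgroup n R :=
  Subgroup.subset_closure ⟨i, j, hij, r, rfl⟩

def diagonalSingle (i : n) (u : Rˣ) : GL n R :=
  ⟨diagonal (Function.update 1 i (u : R)), diagonal (Function.update 1 i ((u⁻¹ : Rˣ) : R)),
    by rw [diagonal_mul_diagonal, ← diagonal_one]; congr 1; ext k; by_cases k = i <;> simp_all,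
    by rw [diagonal_mul_diagonal, ← diagonal_one]; congr 1; ext k; by_cases k = i <;> simp_all⟩

lemma diagonalSingle_mul_elementary_mul_inv {i j : n} (hij : i ≠ j) (u : Rˣ) (r : R) :
    diagonalSingle i u * elementary hij r * (diagonalSingle i u)⁻¹ = elementary hij (u * r) := by
  ext a b
  simp only [diagonalSingle, Units.inv_mk, Units.val_mul, val_elementary, transvection,
    mul_diagonal, diagonal_mul, Function.update_apply, Pi.one_apply, add_apply, one_apply,
    single_apply, ite_mul, one_mul, mul_ite, mul_one]
  split_ifs <;> subst_vars <;> simp_all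

lemma commutator_diagonalSingle_elementary {i j : n} (hij : i ≠ j) (u : Rˣ) (r : R) :
    ⁅diagonalSingle i u, elementary hij r⁆ = elementary hij ((u - 1) * r) := by
  rw [commutatorElement_def, diagonalSingle_mul_elementary_mul_inv, inv_elementary,
    ← elementary_add]
  ring_nf

lemma elementarySubgroup_le_commutator (u : Rˣ) (hu : IsUnit ((u : R) - 1)) :
    elementarySubgroup n R ≤ commutator (GL n R) := by
  rw [elementarySubgroup, Subgroup.closure_le]
  rintro A ⟨i, j, hij, r, hA⟩
  have hA_comm : A = ⁅diagonalSingle i u, elementary hij (hu.unit⁻¹ * r)⁆ := by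
    rw [commutator_diagonalSingle_elementary, ← mul_assoc, IsUnit.mul_val_inv, one_mul]
    exact Units.ext hA
  rw [hA_comm, commutator_def]
  exact Subgroup.commutator_mem_commutator (Subgroup.mem_top _) (Subgroup.mem_top _)

end CommRing

section FinTwo

variable {R : Type*} [CommRing R]

def upperElementary (r : R) : GL (Fin 2) R := elementary zero_ne_one r

def lowerElementary (r : R) : GL (Fin 2) R := elementary one_ne_zero r

@[simp]
lemma val_upperElementary (r : R) :
    (upperElementary r : Matrix (Fin 2) (Fin 2) R) = !![1, r; 0, 1] := by
  ext i j
  fin_cases i <;> fin_cases j <;> simp [upperElementary, transvection, single]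

@[simp]
lemma val_lowerElementary (r : R) :
    (lowerElementary r : Matrix (Fin 2) (Fin 2) R) = !![1, 0; r, 1] := by
  ext i j
  fin_cases i <;> fin_cases j <;> simp [lowerElementary, transvection, single]

@[simp]
lemma det_upperElementary (r : R) : det (upperElementary r) = 1 := det_elementary _ r

@[simp]
lemma det_lowerElementary (r : R) : det (lowerElementary r) = 1 := det_elementary _ r

lemma upperElementary_mem_elementarySubgroup (r : R) :
    upperElementary r ∈ elementarySubgroup (Fin 2) R :=
  elementary_mem_elementarySubgroup _ r

lemma lowerElementary_mem_elementarySubgroup (r : R) :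
    lowerElementary r ∈ elementarySubgroup (Fin 2) R :=
  elementary_mem_elementarySubgroup _ r

def weyl : GL (Fin 2) R := upperElementary (-1) * lowerElementary 1 * upperElementary (-1)

@[simp]
lemma val_weyl : ((weyl : GL (Fin 2) R) : Matrix (Fin 2) (Fin 2) R) = !![0, -1; 1, 0] := by
  simp [weyl]

@[simp]
lemma det_weyl : det (weyl : GL (Fin 2) R) = 1 := by
  simp [weyl]

lemma weyl_mem_elementarySubgroup : weyl ∈ elementarySubgroup (Fin 2) R :=
  mul_mem (mul_mem (upperElementary_mem_elementarySubgroup _)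
    (lowerElementary_mem_elementarySubgroup _)) (upperElementary_mem_elementarySubgroup _)

lemma det_eq_one_iff_fin_two {A : GL (Fin 2) R} :
    det A = 1 ↔ A.val 0 0 * A.val 1 1 - A.val 0 1 * A.val 1 0 = 1 := by
  rw [Units.ext_iff, val_det_apply, det_fin_two, Units.val_one]

lemma lowerElementary_mul_apply_one_zero (r : R) (A : GL (Fin 2) R) :
    (lowerElementary r * A).val 1 0 = r * A.val 0 0 + A.val 1 0 := by
  simp [Matrix.mul_apply, Fin.sum_univ_two]

lemma weyl_mul_upperElementary_mul_apply_one_zero (r : R) (A : GL (Fin 2) R) :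
    (weyl * upperElementary r * A).val 1 0 = A.val 0 0 + r * A.val 1 0 := by
  simp [Matrix.mul_apply, Fin.sum_univ_two]

lemma val_upperElementary_mul_lowerElementary_mul_upperElementary (x c y : R) :
    (upperElementary x * lowerElementary c * upperElementary y).val =
      !![1 + x * c, (1 + x * c) * y + x; c, c * y + 1] := by
  simp

lemma mem_elementarySubgroup_of_isUnit_apply_one_zero {A : GL (Fin 2) R} (hA : det A = 1)
    (hc : IsUnit (A.val 1 0)) : A ∈ elementarySubgroup (Fin 2) R := by
  obtain ⟨c, hc⟩ := hc
  have hdet := det_eq_one_iff_fin_two.1 hA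
  have hcc : A.val 1 0 * ↑c⁻¹ = 1 := hc ▸ c.mul_inv
  have hA_eq : A = upperElementary ((A.val 0 0 - 1) * ↑c⁻¹) * lowerElementary (c : R) *
      upperElementary ((A.val 1 1 - 1) * ↑c⁻¹) := by
    rw [Units.ext_iff, val_upperElementary_mul_lowerElementary_mul_upperElementary, hc]
    conv_lhs => rw [eta_fin_two A.val]
    simp only [EmbeddingLike.apply_eq_iff_eq, vecCons_inj, and_true, true_and]
    refine ⟨⟨?_, ?_⟩, ?_⟩
    · linear_combination (1 - A.val 0 0) * hcc
    · linear_combination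
        (-(A.val 0 1 + (A.val 0 0 - 1) * (A.val 1 1 - 1) * ↑c⁻¹)) * hcc - ↑c⁻¹ * hdet
    · linear_combination (1 - A.val 1 1) * hcc
  rw [hA_eq]
  exact mul_mem (mul_mem (upperElementary_mem_elementarySubgroup _)
    (lowerElementary_mem_elementarySubgroup _)) (upperElementary_mem_elementarySubgroup _)

end FinTwo

attribute [local instance] EuclideanDomain.wellFoundedRelation in
theorem mem_elementarySubgroup_of_det_eq_one {R : Type*} [EuclideanDomain R] {A : GL (Fin 2) R}
    (hA : det A = 1) : A ∈ elementarySubgroup (Fin 2) R := by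
  by_cases hc : A.val 1 0 = 0
  · have had : A.val 0 0 * A.val 1 1 = 1 := by
      simpa [hc] using det_eq_one_iff_fin_two.1 hA
    refine (Subgroup.mul_mem_cancel_left _ (lowerElementary_mem_elementarySubgroup 1)).1 ?_
    refine mem_elementarySubgroup_of_isUnit_apply_one_zero (by simp [hA]) ?_
    rw [lowerElementary_mul_apply_one_zero, hc, one_mul, add_zero]
    exact IsUnit.of_mul_eq_one _ had
  · refine (Subgroup.mul_mem_cancel_left _ (mul_mem weyl_mem_elementarySubgroup
      (upperElementary_mem_elementarySubgroup (-(A.val 0 0 / A.val 1 0))))).1 ?_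
    exact mem_elementarySubgroup_of_det_eq_one (by simp [hA])
termination_by A.val 1 0
decreasing_by
  rw [weyl_mul_upperElementary_mul_apply_one_zero, neg_mul, ← sub_eq_add_neg, mul_comm,
    ← EuclideanDomain.mod_eq_sub_mul_div]
  exact EuclideanDomain.mod_lt _ hc

theorem commutator_le_elementarySubgroup (R : Type*) [EuclideanDomain R] :
    commutator (GL (Fin 2) R) ≤ elementarySubgroup (Fin 2) R :=
  fun _ hA ↦ mem_elementarySubgroup_of_det_eq_one <|
    MonoidHom.mem_ker.1 (Abelianization.commutator_subset_ker GeneralLinearGroup.det hA)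

end Matrix.GeneralLinearGroup

/-- If `R` is a Euclidean domain containing units `u, v` with `u + v = 1`,
then the commutator subgroup of `GL₂(R)` equals `E₂(R)`, the subgroup generated by the
`2 × 2` elementary matrices (transvections). -/
theorem commutator_GL2_eq_elementary (R : Type*) [EuclideanDomain R]
    (hu : ∃ u v : Rˣ, (u : R) + (v : R) = 1) :
    commutator (GL (Fin 2) R) = Subgroup.closure
      {A : GL (Fin 2) R | ∃ (i j : Fin 2) (_ : i ≠ j) (r : R),
        (A : Matrix (Fin 2) (Fin 2) R) = Matrix.transvection i j r} := by
  obtain ⟨u, v, huv⟩ := hu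
  have hu_sub_one : (u : R) - 1 = -v := by linear_combination huv
  exact le_antisymm (Matrix.GeneralLinearGroup.commutator_le_elementarySubgroup R)
    (Matrix.GeneralLinearGroup.elementarySubgroup_le_commutator u (hu_sub_one ▸ v.isUnit.neg))
end
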